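/- arXiv:math/9503212 — 5 statements merged into one kernel-verified Lean document; each statement's English description precedes it below -/
import Mathlib

section
/- For 0 < q ≤ 2 and any ξ, η in L^q([0,1]), one has exp(-‖ξ+η‖^q) + exp(-‖ξ-η‖^q) ≥ 2·exp(-‖ξ‖^q - ‖η‖^q). -/
/-!
Clarkson's inequality `‖ξ + η‖^q + ‖ξ - η‖^q ≤ 2 (‖ξ‖^q + ‖η‖^q)` holds pointwise for `0 ≤ q ≤ 2`:
write `w^q = (w^2)^(q/2)`, apply concavity of `s ↦ s^(q/2)` to `‖a + b‖^2` and `‖a - b‖^2`, the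
parallelogram law, and subadditivity of `s ↦ s^(q/2)`. Integrating gives it in `L^q`, since there
`‖f‖^q = ∫ |f|^q`. With `A = ‖ξ + η‖^q`, `B = ‖ξ - η‖^q`, convexity of `exp` then gives
`exp(-A) + exp(-B) ≥ 2 exp(-(A + B)/2) ≥ 2 exp(-‖ξ‖^q - ‖η‖^q)`.
-/

open MeasureTheory

lemma Real.rpow_add_rpow_le_of_sq_add_sq_eq {q : ℝ} (hq0 : 0 ≤ q) (hq2 : q ≤ 2) {x y u v : ℝ}
    (hx : 0 ≤ x) (hy : 0 ≤ y) (hu : 0 ≤ u) (hv : 0 ≤ v)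
    (h : x ^ 2 + y ^ 2 = 2 * (u ^ 2 + v ^ 2)) :
    x ^ q + y ^ q ≤ 2 * (u ^ q + v ^ q) := by
  have ht0 : 0 ≤ q / 2 := by positivity
  have ht1 : q / 2 ≤ 1 := by linarith
  have hsq : ∀ w : ℝ, 0 ≤ w → w ^ q = (w ^ 2) ^ (q / 2) := fun w hw => by
    rw [← Real.rpow_natCast, ← Real.rpow_mul hw]
    ring_nf
  have hmid := (Real.concaveOn_rpow ht0 ht1).2 (sq_nonneg x) (sq_nonneg y)
    (by norm_num : (0 : ℝ) ≤ 1 / 2) (by norm_num : (0 : ℝ) ≤ 1 / 2) (by norm_num)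
  simp only [smul_eq_mul] at hmid
  rw [hsq x hx, hsq y hy, hsq u hu, hsq v hv]
  calc (x ^ 2) ^ (q / 2) + (y ^ 2) ^ (q / 2)
      ≤ 2 * (1 / 2 * x ^ 2 + 1 / 2 * y ^ 2) ^ (q / 2) := by linarith
    _ = 2 * (u ^ 2 + v ^ 2) ^ (q / 2) := by congr 2; linarith
    _ ≤ 2 * ((u ^ 2) ^ (q / 2) + (v ^ 2) ^ (q / 2)) := by
      gcongr
      exact Real.rpow_add_le_add_rpow (sq_nonneg u) (sq_nonneg v) ht0 ht1

lemma norm_add_rpow_add_norm_sub_rpow_le (𝕜 : Type*) {E : Type*} [RCLike 𝕜]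
    [NormedAddCommGroup E] [InnerProductSpace 𝕜 E] {q : ℝ} (hq0 : 0 ≤ q) (hq2 : q ≤ 2)
    (x y : E) : ‖x + y‖ ^ q + ‖x - y‖ ^ q ≤ 2 * (‖x‖ ^ q + ‖y‖ ^ q) :=
  Real.rpow_add_rpow_le_of_sq_add_sq_eq hq0 hq2 (norm_nonneg _) (norm_nonneg _) (norm_nonneg _)
    (norm_nonneg _) (parallelogram_law_with_norm 𝕜 x y)

namespace MeasureTheory.Lp

variable {α E : Type*} [MeasurableSpace α] {μ : Measure α}

lemma norm_rpow_eq_integral_norm_rpow [NormedAddCommGroup E] {q : ℝ} (hq : 0 < q)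
    (f : Lp E (ENNReal.ofReal q) μ) : ‖f‖ ^ q = ∫ x, ‖f x‖ ^ q ∂μ := by
  rw [norm_def, toReal_eLpNorm (Lp.aestronglyMeasurable f),
    lpNorm_eq_integral_norm_rpow_toReal (by simpa using hq) ENNReal.ofReal_ne_top
      (Lp.aestronglyMeasurable f), ENNReal.toReal_ofReal hq.le,
    Real.rpow_inv_rpow (integral_nonneg fun x => by positivity) hq.ne']

lemma norm_add_rpow_add_norm_sub_rpow_le (𝕜 : Type*) [RCLike 𝕜] [NormedAddCommGroup E]
    [InnerProductSpace 𝕜 E] {q : ℝ} (hq0 : 0 < q) (hq2 : q ≤ 2)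
    (ξ η : Lp E (ENNReal.ofReal q) μ) :
    ‖ξ + η‖ ^ q + ‖ξ - η‖ ^ q ≤ 2 * (‖ξ‖ ^ q + ‖η‖ ^ q) := by
  have hint : ∀ f : Lp E (ENNReal.ofReal q) μ, Integrable (fun x => ‖f x‖ ^ q) μ := fun f =>
    (Lp.memLp f).integrable_norm_rpow (by simpa using hq0) ENNReal.ofReal_ne_top |>.congr
      (by simp [ENNReal.toReal_ofReal hq0.le])
  simp only [norm_rpow_eq_integral_norm_rpow hq0]
  rw [← integral_add (hint _) (hint _), ← integral_add (hint _) (hint _),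
    ← integral_const_mul]
  refine integral_mono_ae ((hint _).add (hint _)) (((hint _).add (hint _)).const_mul 2) ?_
  filter_upwards [coeFn_add ξ η, coeFn_sub ξ η] with x hadd hsub
  rw [hadd, hsub]
  exact _root_.norm_add_rpow_add_norm_sub_rpow_le 𝕜 hq0.le hq2 _ _

end MeasureTheory.Lp

lemma Real.two_mul_exp_neg_le_exp_neg_add_exp_neg {a b c : ℝ} (h : a + b ≤ 2 * c) :
    2 * Real.exp (-c) ≤ Real.exp (-a) + Real.exp (-b) := by
  have hmid := convexOn_exp.2 (Set.mem_univ (-a)) (Set.mem_univ (-b))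
    (by norm_num : (0 : ℝ) ≤ 1 / 2) (by norm_num : (0 : ℝ) ≤ 1 / 2) (by norm_num)
  simp only [smul_eq_mul] at hmid
  have hc : Real.exp (-c) ≤ Real.exp (1 / 2 * -a + 1 / 2 * -b) := Real.exp_le_exp.2 (by linarith)
  linarith

/-- For `0 < q ≤ 2` and `ξ, η ∈ L^q([0,1])`,
`exp(-‖ξ+η‖^q) + exp(-‖ξ-η‖^q) ≥ 2 exp(-‖ξ‖^q - ‖η‖^q)`. -/
theorem exp_norm_add_sub_ge (q : ℝ) (hq0 : 0 < q) (hq2 : q ≤ 2)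
    (ξ η : Lp ℝ (ENNReal.ofReal q) (volume.restrict (Set.Icc (0:ℝ) 1))) :
    Real.exp (-‖ξ + η‖ ^ q) + Real.exp (-‖ξ - η‖ ^ q) ≥
      2 * Real.exp (-‖ξ‖ ^ q - ‖η‖ ^ q) := by
  rw [ge_iff_le, sub_eq_add_neg, ← neg_add]
  exact Real.two_mul_exp_neg_le_exp_neg_add_exp_neg
    (Lp.norm_add_rpow_add_norm_sub_rpow_le ℝ hq0 hq2 ξ η)
end

section
/- Let γ be a symmetric Gaussian measure on ℝ^n, and let f: ℝ^m → ℝ and g: ℝ^{k-m} → ℝ be even continuous positive definite functions (i.e., Fourier transforms of finite symmetric measures μ on ℝ^m and ν on ℝ^{k-m}). Let ξ_1,…,ξ_k ∈ ℝ^n and set X_i(x) = ⟨x,ξ_i⟩. Then ∫ f(X_1,…,X_m)·g(X_{m+1},…,X_k) dγ ≥ (∫ f(X_1,…,X_m) dγ)·(∫ g(X_{m+1},…,X_k) dγ). -/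
/-!
Writing `f(X) = ∫ e^{-i⟨X, t⟩} dμ(t)` and pushing `μ` forward to the ambient space makes `f(X)` the
characteristic function of a finite measure `μ'`, and likewise `g(Y)` that of a symmetric `ν'`.
Exchanging integrals then gives `∫ f(X) dγ = ∫ φ dμ'`, `∫ g(Y) dγ = ∫ φ dν'` and
`∫ f(X) g(Y) dγ = ∫ φ d(μ' ∗ ν')`, where `φ(a) = e^{-Q(a)/2}` is the characteristic function of `γ`
and `Q` its covariance form. Since `Q` obeys the parallelogram law, AM-GM gives
`2 φ(a) φ(b) ≤ φ(a + b) + φ(a - b)`; integrating against `μ' ⊗ ν'`, the symmetry of `ν'` makes the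
two terms on the right contribute equally.
-/

open MeasureTheory ProbabilityTheory Complex
open scoped RealInnerProductSpace

lemma LinearMap.BilinForm.two_mul_exp_mul_exp_le {M : Type*} [AddCommGroup M] [Module ℝ M]
    (B : LinearMap.BilinForm ℝ M) (a b : M) :
    2 * (Real.exp (-B a a / 2) * Real.exp (-B b b / 2)) ≤
      Real.exp (-B (a + b) (a + b) / 2) + Real.exp (-B (a - b) (a - b) / 2) := by
  have parallelogram : B (a + b) (a + b) + B (a - b) (a - b) = 2 * B a a + 2 * B b b := by
    simp only [map_add, map_sub, LinearMap.add_apply, LinearMap.sub_apply]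
    ring
  set u := Real.exp (-B (a + b) (a + b) / 4)
  set v := Real.exp (-B (a - b) (a - b) / 4)
  have hprod : Real.exp (-B a a / 2) * Real.exp (-B b b / 2) = u * v := by
    rw [← Real.exp_add, ← Real.exp_add]
    congr 1
    linarith
  have hu : Real.exp (-B (a + b) (a + b) / 2) = u ^ 2 := by
    rw [← Real.exp_nat_mul]; congr 1; ring
  have hv : Real.exp (-B (a - b) (a - b) / 2) = v ^ 2 := by
    rw [← Real.exp_nat_mul]; congr 1; ring
  rw [hprod, hu, hv]
  nlinarith [sq_nonneg (u - v)]

namespace MeasureTheory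

lemma Measure.isNegInvariant_map {α β : Type*} [MeasurableSpace α] [MeasurableSpace β]
    [Neg α] [Neg β] [MeasurableNeg α] [MeasurableNeg β] {ν : Measure α} [ν.IsNegInvariant]
    {φ : α → β} (hφ : Measurable φ) (hφ_neg : ∀ a, φ (-a) = -φ a) :
    (ν.map φ).IsNegInvariant := by
  refine ⟨?_⟩
  rw [Measure.neg, Measure.map_map measurable_neg hφ]
  conv_rhs => rw [← Measure.neg_eq_self ν, Measure.neg, Measure.map_map hφ measurable_neg]
  congr 1
  ext a
  exact (hφ_neg a).symm

lemma integral_mul_integral_le_integral_conv {G : Type*} [AddCommGroup G] [MeasurableSpace G]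
    [MeasurableAdd₂ G] [MeasurableNeg G] {μ ν : Measure G} [IsFiniteMeasure μ]
    [IsFiniteMeasure ν] [ν.IsNegInvariant] {ρ : G → ℝ} (hρ_meas : Measurable ρ) {C : ℝ}
    (hρ_bdd : ∀ x, |ρ x| ≤ C) (hρ : ∀ a b, 2 * (ρ a * ρ b) ≤ ρ (a + b) + ρ (a - b)) :
    (∫ x, ρ x ∂μ) * (∫ y, ρ y ∂ν) ≤ ∫ x, ρ x ∂(μ ∗ ν) := by
  have integrable (κ : Measure G) [IsFiniteMeasure κ] : Integrable ρ κ :=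
    .of_bound hρ_meas.aestronglyMeasurable C (.of_forall hρ_bdd)
  have translate (x : G) : ρ x * ∫ y, ρ y ∂ν ≤ ∫ y, ρ (x + y) ∂ν := by
    have plus : Integrable (fun y => ρ (x + y)) ν :=
      (integrable _).comp_measurable (measurable_const_add x)
    have minus : Integrable (fun y => ρ (x - y)) ν :=
      (integrable _).comp_measurable (measurable_const_sub x)
    have reflect : ∫ y, ρ (x - y) ∂ν = ∫ y, ρ (x + y) ∂ν := by
      simpa only [sub_neg_eq_add] using (integral_neg_eq_self (fun y => ρ (x - y)) ν).symm
    suffices 2 * (ρ x * ∫ y, ρ y ∂ν) ≤ 2 * ∫ y, ρ (x + y) ∂ν by linarith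
    calc 2 * (ρ x * ∫ y, ρ y ∂ν) = ∫ y, 2 * (ρ x * ρ y) ∂ν := by
          rw [integral_const_mul, integral_const_mul]
      _ ≤ ∫ y, (ρ (x + y) + ρ (x - y)) ∂ν :=
          integral_mono (((integrable ν).const_mul _).const_mul _) (plus.add minus) (hρ x)
      _ = 2 * ∫ y, ρ (x + y) ∂ν := by
          rw [integral_add plus minus, reflect, two_mul]
  rw [← integral_mul_const, integral_conv (integrable _)]
  exact integral_mono ((integrable μ).mul_const _)
    (integrable _ |>.comp_measurable measurable_add (μ := μ.prod ν)).integral_prod_left translate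

lemma ofReal_comp_inner_eq_charFun_map {E ι : Type*} [NormedAddCommGroup E] [InnerProductSpace ℝ E]
    [MeasurableSpace E] [BorelSpace E] [Fintype ι] {μ : Measure (ι → ℝ)}
    {f : (ι → ℝ) → ℝ} (hf : ∀ u, (f u : ℂ) = ∫ t, exp (-(∑ i, u i * t i : ℝ) * I) ∂μ)
    (ξ : ι → E) (x : E) :
    (f (fun i => ⟪x, ξ i⟫) : ℂ) = charFun (μ.map fun t => -∑ i, t i • ξ i) x := by
  rw [hf, charFun_apply, integral_map (by fun_prop : Continuous _).measurable.aemeasurable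
    (by fun_prop)]
  congr with t
  rw [inner_neg_left, sum_inner, ofReal_neg]
  simp only [real_inner_smul_right, real_inner_comm x, mul_comm]

variable {E : Type*} [NormedAddCommGroup E] [InnerProductSpace ℝ E] [MeasurableSpace E]
  [BorelSpace E] [SecondCountableTopology E]

lemma integral_charFun_comm (μ ν : Measure E) [IsFiniteMeasure μ] [IsFiniteMeasure ν] :
    ∫ x, charFun μ x ∂ν = ∫ t, charFun ν t ∂μ := by
  simp_rw [charFun_apply]
  rw [integral_integral_swap]
  · refine integral_congr_ae (.of_forall fun t => integral_congr_ae (.of_forall fun x => ?_))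
    simp only [real_inner_comm]
  · exact .of_bound (by fun_prop) 1 (.of_forall fun _ => (norm_exp_ofReal_mul_I _).le)

lemma integral_eq_integral_re_charFun {γ μ : Measure E} [IsFiniteMeasure γ] [IsFiniteMeasure μ]
    {F : E → ℝ} (hF : ∀ x, (F x : ℂ) = charFun μ x) :
    ∫ x, F x ∂γ = ∫ t, (charFun γ t).re ∂μ := by
  have integrable : Integrable (charFun γ) μ :=
    .of_bound measurable_charFun.aestronglyMeasurable _ (.of_forall (norm_charFun_le (μ := γ)))
  calc ∫ x, F x ∂γ = (∫ x, (F x : ℂ) ∂γ).re := by rw [integral_complex_ofReal, ofReal_re]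
    _ = (∫ t, charFun γ t ∂μ).re := by simp_rw [hF, integral_charFun_comm]
    _ = ∫ t, (charFun γ t).re ∂μ := (integral_re integrable).symm

end MeasureTheory

namespace ProbabilityTheory.IsGaussian

lemma integral_id_eq_zero_of_map_eq_gaussianReal {E : Type*} [NormedAddCommGroup E]
    [NormedSpace ℝ E] [CompleteSpace E] [MeasurableSpace E] [BorelSpace E]
    [SecondCountableTopology E] {γ : Measure E} [IsGaussian γ]
    (h : ∀ L : StrongDual ℝ E, ∃ v : NNReal, γ.map L = gaussianReal 0 v) : γ[id] = 0 :=
  SeparatingDual.eq_zero_of_forall_dual_eq_zero fun L => by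
    obtain ⟨v, hv⟩ := h L
    calc L γ[id] = ∫ y, y ∂(γ.map L) := by
          rw [← L.integral_comp_id_comm' IsGaussian.integrable_id,
            integral_map (by fun_prop) (by fun_prop)]
      _ = 0 := by rw [hv, integral_id_gaussianReal]

variable {E : Type*} [NormedAddCommGroup E] [InnerProductSpace ℝ E] [MeasurableSpace E]
  [BorelSpace E] [SecondCountableTopology E] [CompleteSpace E] {γ : Measure E} [IsGaussian γ]

lemma charFun_eq_exp_covarianceBilin (hγ : γ[id] = 0) (t : E) :
    charFun γ t = Real.exp (-covarianceBilin γ t t / 2) := by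
  rw [IsGaussian.charFun_eq', hγ]
  push_cast
  simp [neg_div]

lemma two_mul_re_charFun_mul_le (hγ : γ[id] = 0) (a b : E) :
    2 * ((charFun γ a).re * (charFun γ b).re) ≤
      (charFun γ (a + b)).re + (charFun γ (a - b)).re := by
  simp only [charFun_eq_exp_covarianceBilin hγ, ofReal_re]
  exact (covarianceBilin γ).toBilinForm.two_mul_exp_mul_exp_le a b

theorem integral_mul_integral_le_integral_mul (hγ : γ[id] = 0) {μ ν : Measure E}
    [IsFiniteMeasure μ] [IsFiniteMeasure ν] [ν.IsNegInvariant] {F G : E → ℝ}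
    (hF : ∀ x, (F x : ℂ) = charFun μ x) (hG : ∀ x, (G x : ℂ) = charFun ν x) :
    (∫ x, F x ∂γ) * (∫ x, G x ∂γ) ≤ ∫ x, F x * G x ∂γ := by
  have hFG (x : E) : ((F x * G x : ℝ) : ℂ) = charFun (μ ∗ ν) x := by
    rw [ofReal_mul, hF, hG, charFun_conv]
  rw [integral_eq_integral_re_charFun hF, integral_eq_integral_re_charFun hG,
    integral_eq_integral_re_charFun hFG]
  exact integral_mul_integral_le_integral_conv (measurable_re.comp measurable_charFun)
    (fun t => (abs_re_le_norm _).trans (norm_charFun_le_one t)) (two_mul_re_charFun_mul_le hγ)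

theorem integral_mul_integral_le_integral_mul_comp_inner (hγ : γ[id] = 0) {ι κ : Type*}
    [Fintype ι] [Fintype κ] {μ : Measure (ι → ℝ)} {ν : Measure (κ → ℝ)} [IsFiniteMeasure μ]
    [IsFiniteMeasure ν] [ν.IsNegInvariant] {f : (ι → ℝ) → ℝ} {g : (κ → ℝ) → ℝ}
    (hf : ∀ u, (f u : ℂ) = ∫ t, exp (-(∑ i, u i * t i : ℝ) * I) ∂μ)
    (hg : ∀ u, (g u : ℂ) = ∫ t, exp (-(∑ j, u j * t j : ℝ) * I) ∂ν)
    (ξ : ι → E) (η : κ → E) :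
    (∫ x, f (fun i => ⟪x, ξ i⟫) ∂γ) * (∫ x, g (fun j => ⟪x, η j⟫) ∂γ) ≤
      ∫ x, f (fun i => ⟪x, ξ i⟫) * g (fun j => ⟪x, η j⟫) ∂γ := by
  have : (ν.map fun s => -∑ j, s j • η j).IsNegInvariant :=
    Measure.isNegInvariant_map (by fun_prop : Continuous _).measurable
      fun s => by simp [Finset.sum_neg_distrib]
  exact integral_mul_integral_le_integral_mul hγ (ofReal_comp_inner_eq_charFun_map hf ξ)
    (ofReal_comp_inner_eq_charFun_map hg η)

end ProbabilityTheory.IsGaussian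

theorem gaussian_posdef_correlation_general
    (n k m : ℕ) (hm : m ≤ k)
    (γ : Measure (EuclideanSpace ℝ (Fin n)))
    -- γ is a symmetric (centered) Gaussian measure: every linear image is a
    -- centered Gaussian on ℝ
    (hγ : ∀ L : EuclideanSpace ℝ (Fin n) →L[ℝ] ℝ,
      ∃ v : NNReal, γ.map L = ProbabilityTheory.gaussianReal 0 v)
    (f : (Fin m → ℝ) → ℝ) (g : (Fin (k - m) → ℝ) → ℝ)
    -- f and g are positive definite: Fourier transforms of finite symmetric measures
    (hf : ∃ μ : Measure (Fin m → ℝ), IsFiniteMeasure μ ∧ μ.map (fun t => -t) = μ ∧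
      ∀ u, (f u : ℂ) = ∫ t, Complex.exp (-(∑ i, u i * t i : ℝ) * Complex.I) ∂μ)
    (hg : ∃ ν : Measure (Fin (k - m) → ℝ), IsFiniteMeasure ν ∧ ν.map (fun t => -t) = ν ∧
      ∀ u, (g u : ℂ) = ∫ t, Complex.exp (-(∑ i, u i * t i : ℝ) * Complex.I) ∂ν)
    (ξ : Fin k → EuclideanSpace ℝ (Fin n)) :
    ∫ x, f (fun i => ⟪x, ξ (Fin.castLE hm i)⟫) *
        g (fun j => ⟪x, ξ (Fin.cast (Nat.add_sub_cancel' hm) (Fin.natAdd m j))⟫) ∂γ ≥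
      (∫ x, f (fun i => ⟪x, ξ (Fin.castLE hm i)⟫) ∂γ) *
      (∫ x, g (fun j => ⟪x, ξ (Fin.cast (Nat.add_sub_cancel' hm) (Fin.natAdd m j))⟫) ∂γ) := by
  obtain ⟨μ, _, -, hfμ⟩ := hf
  obtain ⟨ν, _, hν, hgν⟩ := hg
  have : IsGaussian γ := isGaussian_of_map_eq_gaussianReal fun L => ⟨0, hγ L⟩
  have : ν.IsNegInvariant := ⟨hν⟩
  exact IsGaussian.integral_mul_integral_le_integral_mul_comp_inner
    (IsGaussian.integral_id_eq_zero_of_map_eq_gaussianReal hγ) hfμ hgν _ _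

/-- Correlation-type inequality for even continuous positive definite functions of
jointly Gaussian variables (the `q = 2` case of Theorem 1). -/
theorem gaussian_posdef_correlation
    (n k m : ℕ) (hm : m ≤ k)
    (γ : Measure (EuclideanSpace ℝ (Fin n))) [IsProbabilityMeasure γ]
    -- γ is a symmetric (centered) Gaussian measure: every linear image is a
    -- centered Gaussian on ℝ
    (hγ : ∀ L : EuclideanSpace ℝ (Fin n) →L[ℝ] ℝ,
      ∃ v : NNReal, γ.map L = ProbabilityTheory.gaussianReal 0 v)
    (f : (Fin m → ℝ) → ℝ) (g : (Fin (k - m) → ℝ) → ℝ)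
    (hfc : Continuous f) (hgc : Continuous g)
    (hfe : ∀ u, f (-u) = f u) (hge : ∀ u, g (-u) = g u)
    -- f and g are positive definite: Fourier transforms of finite symmetric measures
    (hf : ∃ μ : Measure (Fin m → ℝ), IsFiniteMeasure μ ∧ μ.map (fun t => -t) = μ ∧
      ∀ u, (f u : ℂ) = ∫ t, Complex.exp (-(∑ i, u i * t i : ℝ) * Complex.I) ∂μ)
    (hg : ∃ ν : Measure (Fin (k - m) → ℝ), IsFiniteMeasure ν ∧ ν.map (fun t => -t) = ν ∧
      ∀ u, (g u : ℂ) = ∫ t, Complex.exp (-(∑ i, u i * t i : ℝ) * Complex.I) ∂ν)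
    (ξ : Fin k → EuclideanSpace ℝ (Fin n)) :
    ∫ x, f (fun i => ⟪x, ξ (Fin.castLE hm i)⟫) *
        g (fun j => ⟪x, ξ (Fin.cast (Nat.add_sub_cancel' hm) (Fin.natAdd m j))⟫) ∂γ ≥
      (∫ x, f (fun i => ⟪x, ξ (Fin.castLE hm i)⟫) ∂γ) *
      (∫ x, g (fun j => ⟪x, ξ (Fin.cast (Nat.add_sub_cancel' hm) (Fin.natAdd m j))⟫) ∂γ) :=
  gaussian_posdef_correlation_general n k m hm γ hγ f g hf hg ξ
end

section
/- (Pólya) Let f: ℝ → ℝ be an even function that is convex and non-increasing on [0,∞) with lim_{t→∞} f(t) = 0 and f(0) = 1. Then f is positive definite. -/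
/-!
Tents `x ↦ max (s - |x|) 0` are positive definite: `max (s - |a - b|) 0` is the length of
`(a, a + s] ∩ (b, b + s]`, i.e. the `L²` inner product of two interval indicators, and Gram
kernels are positive definite. Positive definiteness only involves `f` at the finitely many
points `|tᵢ - tⱼ|`, and on a finite subset of `[0, ∞)` a convex, non-increasing `f ≥ 0` agrees
with a nonnegative combination of tents. To see this, insert the points from right to left:
when `a` is inserted below the current minimum `b`, the combination built so far is affine on
`[0, b]` and below `f` at `a`, so adding a multiple of the tent with peak `b` makes it pass through
`f a`; by convexity the new affine piece through `f a` and `f b` stays below `f` left of `a`.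
-/

open scoped ComplexConjugate ComplexOrder InnerProductSpace
open MeasureTheory Set Finset Filter Topology

-- `0 ≤ z` in `ComplexOrder` means that `z` is real and nonnegative.
def IsPositiveDefinite {G : Type*} [AddGroup G] (φ : G → ℂ) : Prop :=
  ∀ (n : ℕ) (t : Fin n → G) (c : Fin n → ℂ), 0 ≤ ∑ i, ∑ j, φ (t i - t j) * c i * conj (c j)

namespace IsPositiveDefinite

variable {G : Type*} [AddGroup G] {φ ψ : G → ℂ}

theorem zero : IsPositiveDefinite fun _ : G => (0 : ℂ) := fun _ _ _ => by simp

theorem add (hφ : IsPositiveDefinite φ) (hψ : IsPositiveDefinite ψ) :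
    IsPositiveDefinite fun x => φ x + ψ x := fun n t c => by
  simpa only [add_mul, sum_add_distrib] using add_nonneg (hφ n t c) (hψ n t c)

theorem const_mul (hφ : IsPositiveDefinite φ) {a : ℂ} (ha : 0 ≤ a) :
    IsPositiveDefinite fun x => a * φ x := fun n t c => by
  simpa only [mul_assoc, ← mul_sum] using mul_nonneg ha (hφ n t c)

theorem of_inner {E : Type*} [NormedAddCommGroup E] [InnerProductSpace ℂ E] (v : G → E)
    (h : ∀ x y, φ (x - y) = ⟪v y, v x⟫_ℂ) : IsPositiveDefinite φ := fun n t c => by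
  have key : ∑ i, ∑ j, φ (t i - t j) * c i * conj (c j) =
      ⟪∑ j, c j • v (t j), ∑ i, c i • v (t i)⟫_ℂ := by
    simp_rw [sum_inner, inner_sum, inner_smul_left, inner_smul_right, h]
    rw [sum_comm]
    refine sum_congr rfl fun i _ => sum_congr rfl fun j _ => ?_
    ring
  rw [key, inner_self_eq_norm_sq_to_K]
  exact pow_nonneg (Complex.zero_le_real.mpr (norm_nonneg (∑ j, c j • v (t j)))) 2

end IsPositiveDefinite

theorem Real.volume_real_Ioc_inter_Ioc_add (a b s : ℝ) :
    volume.real (Ioc a (a + s) ∩ Ioc b (b + s)) = max (s - |a - b|) 0 := by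
  rw [Set.Ioc_inter_Ioc, Real.volume_real_Ioc, min_add_add_right, ← max_sub_min_eq_abs']
  ring_nf

theorem isPositiveDefinite_tent (s : ℝ) :
    IsPositiveDefinite fun x : ℝ => ((max (s - |x|) 0 : ℝ) : ℂ) := by
  refine IsPositiveDefinite.of_inner
    (fun a => indicatorConstLp 2 (measurableSet_Ioc (a := a) (b := a + s))
      (μ := volume) measure_Ioc_lt_top.ne (1 : ℂ))
    fun x y => ?_
  rw [L2.inner_indicatorConstLp_one_indicatorConstLp_one measurableSet_Ioc measurableSet_Ioc
    measure_Ioc_lt_top.ne measure_Ioc_lt_top.ne, Real.volume_real_Ioc_inter_Ioc_add, abs_sub_comm]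
  rfl

theorem ConvexOn.secant_le_of_le_of_lt {s : Set ℝ} {f : ℝ → ℝ} (hf : ConvexOn ℝ s f) {x a b : ℝ}
    (hx : x ∈ s) (hb : b ∈ s) (hxa : x ≤ a) (hab : a < b) :
    f a + (f b - f a) / (b - a) * (x - a) ≤ f x := by
  rcases hxa.eq_or_lt with rfl | hxa
  · simp
  have hslope := hf.slope_mono_adjacent hx hb hxa hab
  rw [div_le_iff₀ (sub_pos.2 hxa)] at hslope
  linarith

theorem AntitoneOn.le_of_tendsto {f : ℝ → ℝ} {a L x : ℝ} (hf : AntitoneOn f (Ici a))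
    (hL : Tendsto f atTop (𝓝 L)) (hx : a ≤ x) : L ≤ f x :=
  _root_.le_of_tendsto hL <| (eventually_ge_atTop x).mono fun _ hy => hf hx (hx.trans hy) hy

def IsAffineMinorantOn (f g : ℝ → ℝ) (b : ℝ) : Prop :=
  ∃ σ, ∀ x ∈ Icc 0 b, g x = f b + σ * (x - b) ∧ g x ≤ f x

section Polya

variable {f : ℝ → ℝ} (hconv : ConvexOn ℝ (Ici 0) f)

include hconv in
theorem IsAffineMinorantOn.exists_add_tent {g : ℝ → ℝ} {a b : ℝ}
    (hg : IsAffineMinorantOn f g b) (ha : 0 ≤ a) (hab : a < b) :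
    ∃ ν : ℝ, 0 ≤ ν ∧ IsAffineMinorantOn f (fun x => g x + ν * max (b - x) 0) a := by
  obtain ⟨σ, hσ⟩ := hg
  obtain ⟨hga, hgfa⟩ := hσ a ⟨ha, hab.le⟩
  have hba : 0 < b - a := sub_pos.2 hab
  refine ⟨(f a - g a) / (b - a), div_nonneg (sub_nonneg.2 hgfa) hba.le,
    (f b - f a) / (b - a), fun x hx => ?_⟩
  have hxb : x ≤ b := hx.2.trans hab.le
  have hgx : g x + (f a - g a) / (b - a) * max (b - x) 0 =
      f a + (f b - f a) / (b - a) * (x - a) := by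
    rw [max_eq_left (sub_nonneg.2 hxb), (hσ x ⟨hx.1, hxb⟩).1, hga]
    field_simp
    ring
  exact ⟨hgx, hgx.trans_le <| hconv.secant_le_of_le_of_lt hx.1 (ha.trans hab.le) hx.2 hab⟩

variable (hmono : AntitoneOn f (Ici 0)) (hlim : Tendsto f atTop (𝓝 0))
include hconv hmono hlim

theorem exists_tent_isAffineMinorantOn {a : ℝ} (ha : 0 ≤ a) :
    ∃ μ r : ℝ, 0 ≤ μ ∧ IsAffineMinorantOn f (fun x => μ * max (r - x) 0) a := by
  rcases (hmono.le_of_tendsto hlim ha).eq_or_lt with hfa | hfa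
  · exact ⟨0, a, le_rfl, 0, fun x hx => by simp [← hfa, hmono.le_of_tendsto hlim hx.1]⟩
  obtain ⟨c, hfc, hac⟩ := ((hlim.eventually (gt_mem_nhds hfa)).and (eventually_gt_atTop a)).exists
  set σ := (f c - f a) / (c - a)
  have hσ : σ < 0 := div_neg_of_neg_of_pos (by linarith) (by linarith)
  refine ⟨-σ, a - f a / σ, by linarith, σ, fun x hx => ?_⟩
  have hgx : -σ * max (a - f a / σ - x) 0 = f a + σ * (x - a) := by
    have : f a / σ ≤ 0 := div_nonpos_of_nonneg_of_nonpos hfa.le hσ.le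
    rw [max_eq_left (by linarith [hx.2])]
    field_simp [hσ.ne]
    ring
  exact ⟨hgx, hgx.trans_le (hconv.secant_le_of_le_of_lt hx.1 (ha.trans hac.le) hx.2 hac)⟩

theorem exists_isPositiveDefinite_comp_abs_eqOn (s : Finset ℝ) (hs : ∀ x ∈ s, 0 ≤ x) :
    ∃ g : ℝ → ℝ, IsPositiveDefinite (fun x => (g |x| : ℂ)) ∧ EqOn g f s ∧
      ∀ b ∈ s, (∀ y ∈ s, b ≤ y) → IsAffineMinorantOn f g b := by
  induction s using Finset.induction_on_min with
  | empty => exact ⟨0, by simpa using IsPositiveDefinite.zero (G := ℝ), by simp, by simp⟩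
  | insert a s has ih =>
    have ha : 0 ≤ a := hs a (mem_insert_self a s)
    obtain ⟨g, hg, hgf, hgmin⟩ := ih fun x hx => hs x (mem_insert_of_mem hx)
    obtain ⟨g', hg', hg's, hg'a⟩ : ∃ g' : ℝ → ℝ, IsPositiveDefinite (fun x => (g' |x| : ℂ)) ∧
        EqOn g' g s ∧ IsAffineMinorantOn f g' a := by
      rcases s.eq_empty_or_nonempty with rfl | hne
      · obtain ⟨μ, r, hμ, hmin⟩ := exists_tent_isAffineMinorantOn hconv hmono hlim ha
        refine ⟨fun x => μ * max (r - x) 0, ?_, by simp, hmin⟩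
        simpa using (isPositiveDefinite_tent r).const_mul (Complex.zero_le_real.2 hμ)
      obtain ⟨b, hbs, hbmin⟩ : ∃ b ∈ s, ∀ y ∈ s, b ≤ y := ⟨_, s.min'_mem hne, s.min'_le⟩
      obtain ⟨ν, hν, hmin⟩ := (hgmin b hbs hbmin).exists_add_tent hconv ha (has b hbs)
      refine ⟨fun x => g x + ν * max (b - x) 0, ?_, fun y hy => ?_, hmin⟩
      · simpa using hg.add ((isPositiveDefinite_tent b).const_mul (Complex.zero_le_real.2 hν))
      · simp only [max_eq_right (sub_nonpos.2 (hbmin y hy)), mul_zero, add_zero]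
    refine ⟨g', hg', ?_, fun b hb hbmin => ?_⟩
    · intro x hx
      rcases mem_insert.1 hx with rfl | hx
      · obtain ⟨σ, hσ⟩ := hg'a
        simpa using (hσ x ⟨ha, le_rfl⟩).1
      · rw [hg's hx, hgf hx]
    · obtain rfl : b = a := by
        rcases mem_insert.1 hb with rfl | hb
        · rfl
        · exact absurd (hbmin a (mem_insert_self a s)) (has b hb).not_ge
      exact hg'a

end Polya

theorem polya_criterion_general (f : ℝ → ℝ)
    (heven : ∀ t, f (-t) = f t)
    (hconv : ConvexOn ℝ (Set.Ici (0:ℝ)) f)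
    (hmono : AntitoneOn f (Set.Ici (0:ℝ)))
    (hlim : Filter.Tendsto f Filter.atTop (nhds 0)) :
    ∀ (n : ℕ) (t : Fin n → ℝ) (c : Fin n → ℂ),
      0 ≤ (∑ i, ∑ j, (f (t i - t j) : ℂ) * c i * conj (c j)).re ∧
      (∑ i, ∑ j, (f (t i - t j) : ℂ) * c i * conj (c j)).im = 0 := by
  intro n t c
  let D := Finset.univ.image fun p : Fin n × Fin n => |t p.1 - t p.2|
  have hD : ∀ x ∈ D, 0 ≤ x := fun x hx => by
    obtain ⟨p, -, rfl⟩ := mem_image.1 hx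
    exact abs_nonneg _
  obtain ⟨g, hg, hgf, -⟩ := exists_isPositiveDefinite_comp_abs_eqOn hconv hmono hlim D hD
  have hfg : ∀ i j, f (t i - t j) = g |t i - t j| := fun i j => by
    rw [hgf (mem_image_of_mem _ (mem_univ (i, j)))]
    rcases abs_choice (t i - t j) with h | h <;> rw [h]
    rw [heven]
  obtain ⟨hre, him⟩ := Complex.nonneg_iff.1 (hg n t c)
  simp only [hfg]
  exact ⟨hre, him.symm⟩

/-- Pólya's criterion: an even function, convex and non-increasing on `[0,∞)`,
tending to `0` at infinity with `f 0 = 1`, is positive definite. -/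
theorem polya_criterion (f : ℝ → ℝ)
    (heven : ∀ t, f (-t) = f t)
    (hconv : ConvexOn ℝ (Set.Ici (0:ℝ)) f)
    (hmono : AntitoneOn f (Set.Ici (0:ℝ)))
    (hlim : Filter.Tendsto f Filter.atTop (nhds 0))
    (h0 : f 0 = 1) :
    ∀ (n : ℕ) (t : Fin n → ℝ) (c : Fin n → ℂ),
      0 ≤ (∑ i, ∑ j, (f (t i - t j) : ℂ) * c i * conj (c j)).re ∧
      (∑ i, ∑ j, (f (t i - t j) : ℂ) * c i * conj (c j)).im = 0 :=
  polya_criterion_general f heven hconv hmono hlim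
end

section
/- Let F, G ⊂ ℝ^k be bounded convex symmetric sets with nonempty interior, and for 0 ≤ λ < 1 let μ_λ be the Gaussian measure on ℝ^{2k} with covariance [[I, λI],[λI, I]]. Then lim_{λ→1⁻} μ_λ(F × G) = ν(F ∩ G), where ν is the standard Gaussian measure on ℝ^k. -/
/-!
Under the correlated Gaussian measure, `x` is standard Gaussian and, given `x`, `y` is
distributed as `λ x + √(1 - λ²) z` with `z` standard Gaussian and independent of `x`.
Hence the measure of `F × G` is `∫_F φ(x) P_λ 1_G(x) dx`, where `P_λ` is the Mehler operator.
As `λ → 1`, `P_λ 1_G(x) → 1_G(x)` at every point where `1_G` is continuous, that is, off the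
frontier of `G`.
The frontier of a convex set is Lebesgue-null, so dominated convergence gives `ν(F ∩ G)`.
-/

open MeasureTheory Real Filter Topology Module Set
open scoped RealInnerProductSpace

section

variable {E : Type*} [NormedAddCommGroup E] [InnerProductSpace ℝ E]

variable (E) in
noncomputable def stdGaussianPDF (x : E) : ℝ :=
  (√((2 * π) ^ finrank ℝ E))⁻¹ * exp (-‖x‖ ^ 2 / 2)

@[fun_prop]
lemma continuous_stdGaussianPDF : Continuous (stdGaussianPDF E) := by
  unfold stdGaussianPDF; fun_prop

lemma stdGaussianPDF_nonneg (x : E) : 0 ≤ stdGaussianPDF E x := by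
  unfold stdGaussianPDF; positivity

variable (E) in
noncomputable def correlatedGaussianPDF (lam : ℝ) (x y : E) : ℝ :=
  ((2 * π) ^ finrank ℝ E * √((1 - lam ^ 2) ^ finrank ℝ E))⁻¹ *
    exp (-(‖x‖ ^ 2 - 2 * lam * ⟪x, y⟫ + ‖y‖ ^ 2) / (2 * (1 - lam ^ 2)))

lemma correlatedGaussianPDF_eq {lam : ℝ} (hlam : lam ^ 2 < 1) (x y : E) :
    correlatedGaussianPDF E lam x y = stdGaussianPDF E x *
      ((√(1 - lam ^ 2) ^ finrank ℝ E)⁻¹ *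
        stdGaussianPDF E ((√(1 - lam ^ 2))⁻¹ • (y - lam • x))) := by
  set n := finrank ℝ E
  have hs : 0 < 1 - lam ^ 2 := by linarith
  have hsqrt : √((1 - lam ^ 2) ^ n) = √(1 - lam ^ 2) ^ n := by
    rw [← sqrt_sq (by positivity : 0 ≤ √(1 - lam ^ 2) ^ n), ← pow_mul, mul_comm, pow_mul,
      sq_sqrt hs.le]
  have hnorm : ‖(√(1 - lam ^ 2))⁻¹ • (y - lam • x)‖ ^ 2 =
      (‖y‖ ^ 2 - 2 * lam * ⟪x, y⟫ + lam ^ 2 * ‖x‖ ^ 2) / (1 - lam ^ 2) := by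
    rw [norm_smul, mul_pow, norm_inv, norm_of_nonneg (sqrt_nonneg _), inv_pow, sq_sqrt hs.le,
      norm_sub_sq_real, real_inner_smul_right, real_inner_comm, norm_smul, mul_pow, norm_eq_abs,
      sq_abs]
    ring
  have h2pi : √((2 * π) ^ n) * √((2 * π) ^ n) = (2 * π) ^ n := mul_self_sqrt (by positivity)
  unfold correlatedGaussianPDF stdGaussianPDF
  rw [hsqrt, hnorm,
    show ∀ a b d e : ℝ, a⁻¹ * d * (b⁻¹ * (a⁻¹ * e)) = (a * a * b)⁻¹ * (d * e) by
      intros; field_simp,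
    h2pi, ← exp_add]
  congr 2
  field_simp
  ring

lemma norm_mul_stdGaussianPDF_le {g : E → ℝ} {C : ℝ} (hC : ∀ y, |g y| ≤ C) (y z : E) :
    ‖g y * stdGaussianPDF E z‖ ≤ C * stdGaussianPDF E z := by
  rw [norm_mul, norm_of_nonneg (stdGaussianPDF_nonneg z)]
  exact mul_le_mul_of_nonneg_right (hC y) (stdGaussianPDF_nonneg z)

variable [FiniteDimensional ℝ E] [MeasurableSpace E] [BorelSpace E]

variable (E) in
/-- The Ornstein–Uhlenbeck semigroup in Mehler's form, `P_t` with `lam = exp (-t)`. -/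
noncomputable def mehlerOperator (lam : ℝ) (g : E → ℝ) (x : E) : ℝ :=
  ∫ z, g (lam • x + √(1 - lam ^ 2) • z) * stdGaussianPDF E z

lemma integral_stdGaussianPDF : ∫ x, stdGaussianPDF E x = 1 := by
  have h := GaussianFourier.integral_rexp_neg_mul_sq_norm (V := E) (b := 1 / 2) one_half_pos
  unfold stdGaussianPDF
  rw [integral_const_mul]
  simp_rw [neg_div, div_eq_inv_mul _ (2 : ℝ), ← neg_mul, inv_eq_one_div, h]
  rw [show π / (1 / 2) = 2 * π by ring, sqrt_eq_rpow, ← rpow_natCast,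
    ← rpow_mul (by positivity), mul_one_div, one_div_mul_cancel (by positivity)]

lemma integrable_stdGaussianPDF : Integrable (stdGaussianPDF E) :=
  .of_integral_ne_zero (by simp [integral_stdGaussianPDF])

lemma integral_mul_scaled_stdGaussianPDF (g : E → ℝ) (a : E) {σ : ℝ} (hσ : 0 < σ) :
    ∫ y, g y * ((σ ^ finrank ℝ E)⁻¹ * stdGaussianPDF E (σ⁻¹ • (y - a))) =
      ∫ z, g (a + σ • z) * stdGaussianPDF E z := by
  set H : E → ℝ := fun z ↦ g (a + σ • z) * stdGaussianPDF E z
  have hH (y : E) : g y * ((σ ^ finrank ℝ E)⁻¹ * stdGaussianPDF E (σ⁻¹ • (y - a))) =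
      (σ ^ finrank ℝ E)⁻¹ * H (σ⁻¹ • (y - a)) := by
    simp only [H, smul_inv_smul₀ hσ.ne', add_sub_cancel]
    ring
  simp_rw [hH]
  rw [integral_const_mul, integral_sub_right_eq_self (fun y ↦ H (σ⁻¹ • y)),
    Measure.integral_comp_inv_smul_of_nonneg _ _ hσ.le, smul_eq_mul,
    inv_mul_cancel_left₀ (by positivity)]

lemma setIntegral_correlatedGaussianPDF_eq {G : Set E} (hG : MeasurableSet G) {lam : ℝ}
    (hlam : lam ^ 2 < 1) (x : E) :
    ∫ y in G, correlatedGaussianPDF E lam x y =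
      stdGaussianPDF E x * mehlerOperator E lam (G.indicator 1) x := by
  rw [mehlerOperator, ← integral_mul_scaled_stdGaussianPDF _ _ (sqrt_pos.2 (by linarith)),
    ← integral_const_mul, ← integral_indicator hG]
  refine integral_congr_ae (.of_forall fun y ↦ ?_)
  by_cases hy : y ∈ G
  · simp only [indicator_of_mem hy, Pi.one_apply, correlatedGaussianPDF_eq hlam]
    ring
  · simp [indicator_of_notMem hy]

section Mehler

variable {g : E → ℝ} {C : ℝ}

lemma abs_mehlerOperator_le (hC : ∀ y, |g y| ≤ C) (lam : ℝ) (x : E) :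
    |mehlerOperator E lam g x| ≤ C := by
  unfold mehlerOperator
  simpa [integral_const_mul, integral_stdGaussianPDF] using
    norm_integral_le_of_norm_le (integrable_stdGaussianPDF.const_mul C)
      (.of_forall fun z ↦ norm_mul_stdGaussianPDF_le hC _ z)

lemma stronglyMeasurable_mehlerOperator (hg : Measurable g) (lam : ℝ) :
    StronglyMeasurable (mehlerOperator E lam g) :=
  StronglyMeasurable.integral_prod_right' (ν := volume) (f := fun p : E × E ↦
    g (lam • p.1 + √(1 - lam ^ 2) • p.2) * stdGaussianPDF E p.2)
    ((hg.comp (by fun_prop)).mul (by fun_prop)).stronglyMeasurable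

lemma tendsto_mehlerOperator (hg : Measurable g) (hC : ∀ y, |g y| ≤ C) {x : E}
    (hx : ContinuousAt g x) :
    Tendsto (fun lam ↦ mehlerOperator E lam g x) (𝓝 1) (𝓝 (g x)) := by
  have hlim : ∫ z, g x * stdGaussianPDF E z = g x := by
    rw [integral_const_mul, integral_stdGaussianPDF, mul_one]
  rw [← hlim]
  unfold mehlerOperator
  refine tendsto_integral_filter_of_dominated_convergence (l := 𝓝 (1 : ℝ))
    (fun z ↦ C * stdGaussianPDF E z)
    (.of_forall fun lam ↦ ?_) (.of_forall fun lam ↦ .of_forall fun z ↦ ?_)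
    (integrable_stdGaussianPDF.const_mul C) (.of_forall fun z ↦ ?_)
  · exact ((hg.comp (by fun_prop)).mul continuous_stdGaussianPDF.measurable).aestronglyMeasurable
  · exact norm_mul_stdGaussianPDF_le hC _ z
  · have hcont : Continuous fun lam : ℝ ↦ lam • x + √(1 - lam ^ 2) • z := by fun_prop
    have hpt : Tendsto (fun lam : ℝ ↦ lam • x + √(1 - lam ^ 2) • z)
        (𝓝 1) (𝓝 x) := by
      simpa using hcont.tendsto 1
    exact (hx.tendsto.comp hpt).mul_const _

lemma tendsto_setIntegral_stdGaussianPDF_mul_mehlerOperator (F : Set E) (hg : Measurable g)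
    (hC : ∀ y, |g y| ≤ C) (hcont : ∀ᵐ x, ContinuousAt g x) :
    Tendsto (fun lam ↦ ∫ x in F, stdGaussianPDF E x * mehlerOperator E lam g x)
      (𝓝 1) (𝓝 (∫ x in F, stdGaussianPDF E x * g x)) := by
  refine tendsto_integral_filter_of_dominated_convergence (fun x ↦ stdGaussianPDF E x * C)
    (.of_forall fun lam ↦ ?_) (.of_forall fun lam ↦ .of_forall fun x ↦ ?_)
    (integrable_stdGaussianPDF.mul_const C).restrict
    (ae_restrict_of_ae (hcont.mono fun x hx ↦ ?_))
  · exact (continuous_stdGaussianPDF.stronglyMeasurable.mul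
      (stronglyMeasurable_mehlerOperator hg lam)).aestronglyMeasurable
  · rw [norm_mul, norm_of_nonneg (stdGaussianPDF_nonneg x)]
    exact mul_le_mul_of_nonneg_left (abs_mehlerOperator_le hC lam x) (stdGaussianPDF_nonneg x)
  · exact (tendsto_mehlerOperator hg hC hx).const_mul _

end Mehler

theorem tendsto_setIntegral_correlatedGaussianPDF_of_measurableSet (F : Set E) {G : Set E}
    (hG : MeasurableSet G) (hGfr : volume (frontier G) = 0) :
    Tendsto (fun lam ↦ ∫ x in F, ∫ y in G, correlatedGaussianPDF E lam x y) (𝓝[<] 1)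
      (𝓝 (∫ x in F ∩ G, stdGaussianPDF E x)) := by
  have hbound (y : E) : |G.indicator 1 y| ≤ (1 : ℝ) := by
    by_cases hy : y ∈ G <;> simp [hy]
  have hcont : ∀ᵐ x, ContinuousAt (G.indicator (1 : E → ℝ)) x :=
    (measure_eq_zero_iff_ae_notMem.1 hGfr).mono fun x hx ↦
      continuousOn_const.continuousAt_indicator hx
  have hlim := tendsto_setIntegral_stdGaussianPDF_mul_mehlerOperator (g := G.indicator 1) F
    (measurable_const.indicator hG) hbound hcont
  have hrhs : ∫ x in F, stdGaussianPDF E x * G.indicator 1 x =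
      ∫ x in F ∩ G, stdGaussianPDF E x := by
    simp_rw [← indicator_mul_right, Pi.one_apply, mul_one]
    exact setIntegral_indicator hG
  rw [hrhs] at hlim
  refine (hlim.mono_left nhdsWithin_le_nhds).congr' ?_
  filter_upwards [Ioo_mem_nhdsLT (show (-1 : ℝ) < 1 by norm_num)] with lam hlam
  have hlam2 : lam ^ 2 < 1 := (sq_lt_one_iff_abs_lt_one lam).2 (abs_lt.2 hlam)
  exact integral_congr_ae (.of_forall fun x ↦
    (setIntegral_correlatedGaussianPDF_eq hG hlam2 x).symm)

theorem tendsto_setIntegral_correlatedGaussianPDF (F : Set E) {G : Set E}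
    (hGfr : volume (frontier G) = 0) :
    Tendsto (fun lam ↦ ∫ x in F, ∫ y in G, correlatedGaussianPDF E lam x y) (𝓝[<] 1)
      (𝓝 (∫ x in F ∩ G, stdGaussianPDF E x)) := by
  have hGae : interior G =ᵐ[volume] G := interior_ae_eq_of_null_frontier hGfr
  simpa only [setIntegral_congr_set hGae, setIntegral_congr_set ((ae_eq_refl F).inter hGae)] using
    tendsto_setIntegral_correlatedGaussianPDF_of_measurableSet F isOpen_interior.measurableSet
      (measure_mono_null frontier_interior_subset hGfr)

end

theorem gaussian_lambda_limit_general (k : ℕ)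
    (F G : Set (EuclideanSpace ℝ (Fin k)))
    (hGconv : Convex ℝ G) :
    Filter.Tendsto
      (fun lam : ℝ => ∫ x in F, ∫ y in G,
        ((2 * π) ^ k * Real.sqrt ((1 - lam ^ 2) ^ k))⁻¹ *
          Real.exp (-(‖x‖ ^ 2 - 2 * lam * ⟪x, y⟫ + ‖y‖ ^ 2) / (2 * (1 - lam ^ 2))))
      (nhdsWithin 1 (Set.Ico (0:ℝ) 1))
      (nhds (∫ x in F ∩ G, (Real.sqrt ((2 * π) ^ k))⁻¹ * Real.exp (-‖x‖ ^ 2 / 2))) := by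
  simpa only [correlatedGaussianPDF, stdGaussianPDF, finrank_euclideanSpace_fin] using
    (tendsto_setIntegral_correlatedGaussianPDF F (hGconv.addHaar_frontier volume)).mono_left
      (nhdsWithin_mono _ Ico_subset_Iio_self)

/-- As `λ → 1⁻`, the Gaussian measure with covariance `[[I, λI],[λI, I]]` of
`F × G` tends to the standard Gaussian measure of `F ∩ G`. -/
theorem gaussian_lambda_limit (k : ℕ)
    (F G : Set (EuclideanSpace ℝ (Fin k)))
    (hFconv : Convex ℝ F) (hFsymm : F = -F) (hFbd : Bornology.IsBounded F)
    (hFint : (interior F).Nonempty)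
    (hGconv : Convex ℝ G) (hGsymm : G = -G) (hGbd : Bornology.IsBounded G)
    (hGint : (interior G).Nonempty) :
    Filter.Tendsto
      (fun lam : ℝ => ∫ x in F, ∫ y in G,
        ((2 * π) ^ k * Real.sqrt ((1 - lam ^ 2) ^ k))⁻¹ *
          Real.exp (-(‖x‖ ^ 2 - 2 * lam * ⟪x, y⟫ + ‖y‖ ^ 2) / (2 * (1 - lam ^ 2))))
      (nhdsWithin 1 (Set.Ico (0:ℝ) 1))
      (nhds (∫ x in F ∩ G, (Real.sqrt ((2 * π) ^ k))⁻¹ * Real.exp (-‖x‖ ^ 2 / 2))) :=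
  gaussian_lambda_limit_general k F G hGconv
end

section
/- Let u ∈ ℝ^k not lie in the topological boundary of the convex set F nor of the convex set G. Then lim_{λ→1⁻} (√π (1-λ))^{-k} ∫_{(F-u)∩(u-G)} exp(-‖v‖²/(1-λ)) dv = χ_{F∩G}(u). -/
/-!
After the substitution `t = 1 - λ` the normalised integral is the mass of
`S = (F - u) ∩ (u - G)` under a centred Gaussian of variance `t / 2`, which concentrates at `0`
as `t → 0⁺`. Since `u` lies on neither frontier, membership of `u + v` in `F` and of `u - v`
in `G` does not change for small `v`; hence either `S` or its complement is a neighbourhood of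
`0`, and the Gaussian tail bound outside a ball shows that the mass tends to `1`, resp. `0`.
-/

open MeasureTheory Real Filter Topology Module Set

theorem eventually_mem_iff_of_notMem_frontier {X : Type*} [TopologicalSpace X] {s : Set X}
    {x : X} (hx : x ∉ frontier s) : ∀ᶠ y in 𝓝 x, (y ∈ s ↔ x ∈ s) := by
  by_cases hxs : x ∈ s
  · have hs : s ∈ 𝓝 x :=
      mem_interior_iff_mem_nhds.1 ((mem_interior_iff_notMem_frontier hxs).2 hx)
    filter_upwards [hs] with y hy using iff_of_true hy hxs
  · rw [← frontier_compl] at hx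
    have hs : sᶜ ∈ 𝓝 x :=
      mem_interior_iff_mem_nhds.1 ((mem_interior_iff_notMem_frontier (s := sᶜ) hxs).2 hx)
    filter_upwards [hs] with y hy using iff_of_false hy hxs

theorem tendsto_one_sub_nhdsLT_one : Tendsto (fun x : ℝ => 1 - x) (𝓝[<] 1) (𝓝[>] 0) := by
  simpa using (continuous_sub_left (1 : ℝ)).continuousWithinAt.tendsto_nhdsWithin
    (s := Iio 1) (x := 1) (t := Ioi 0) fun x hx => sub_pos.2 hx

section Gaussian

variable {V : Type*} [NormedAddCommGroup V] [InnerProductSpace ℝ V] [FiniteDimensional ℝ V]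
  [MeasurableSpace V] [BorelSpace V]

theorem integral_exp_neg_sq_norm_div {t : ℝ} (ht : 0 < t) :
    ∫ v : V, exp (-‖v‖ ^ 2 / t) = √(π * t) ^ finrank ℝ V := by
  simp_rw [neg_div, div_eq_inv_mul (‖_‖ ^ 2), ← neg_mul]
  rw [GaussianFourier.integral_rexp_neg_mul_sq_norm (inv_pos.2 ht), div_inv_eq_mul,
    sqrt_eq_rpow, ← rpow_natCast, ← rpow_mul (by positivity)]
  ring_nf

theorem integrable_exp_neg_sq_norm_div {t : ℝ} (ht : 0 < t) :
    Integrable fun v : V => exp (-‖v‖ ^ 2 / t) :=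
  .of_integral_ne_zero <| by rw [integral_exp_neg_sq_norm_div ht]; positivity

/-- For measurable `S` and `t > 0`, this is the mass of `S` under the centred Gaussian
measure with covariance `(t / 2) • id`. -/
noncomputable def gaussianMass (t : ℝ) (S : Set V) : ℝ :=
  (√(π * t) ^ finrank ℝ V)⁻¹ * ∫ v in S, exp (-‖v‖ ^ 2 / t)

theorem gaussianMass_nonneg (t : ℝ) (S : Set V) : 0 ≤ gaussianMass t S :=
  mul_nonneg (by positivity) (setIntegral_nonneg_of_ae (ae_of_all _ fun _ => (exp_pos _).le))

variable {t : ℝ}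

theorem gaussianMass_univ (ht : 0 < t) : gaussianMass t (univ : Set V) = 1 := by
  rw [gaussianMass, setIntegral_univ, integral_exp_neg_sq_norm_div ht]
  exact inv_mul_cancel₀ (by positivity)

theorem gaussianMass_mono (ht : 0 < t) {S T : Set V} (hST : S ⊆ T) :
    gaussianMass t S ≤ gaussianMass t T := by
  refine mul_le_mul_of_nonneg_left ?_ (by positivity)
  exact setIntegral_mono_set (integrable_exp_neg_sq_norm_div ht).integrableOn
    (ae_of_all _ fun _ => (exp_pos _).le) (Eventually.of_forall hST)

theorem gaussianMass_le_one (ht : 0 < t) (S : Set V) : gaussianMass t S ≤ 1 :=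
  gaussianMass_univ (V := V) ht ▸ gaussianMass_mono ht (subset_univ S)

theorem gaussianMass_add_compl (ht : 0 < t) {S : Set V} (hS : MeasurableSet S) :
    gaussianMass t S + gaussianMass t Sᶜ = 1 := by
  rw [gaussianMass, gaussianMass, ← mul_add,
    integral_add_compl hS (integrable_exp_neg_sq_norm_div ht), ← setIntegral_univ]
  exact gaussianMass_univ ht

/-- Outside the ball of radius `r` the density `exp (-‖v‖² / t)` is at most `exp (-r² / (2t))`
times the density `exp (-‖v‖² / (2t))` of twice the variance. -/
theorem gaussianMass_norm_ge_le (ht : 0 < t) {r : ℝ} (hr : 0 ≤ r) :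
    gaussianMass t {v : V | r ≤ ‖v‖} ≤ √2 ^ finrank ℝ V * exp (-r ^ 2 / (2 * t)) := by
  set A := {v : V | r ≤ ‖v‖}
  set c := exp (-r ^ 2 / (2 * t))
  have h2t : 0 < 2 * t := by positivity
  have hdensity : ∀ v ∈ A, exp (-‖v‖ ^ 2 / t) ≤ c * exp (-‖v‖ ^ 2 / (2 * t)) := by
    intro v hv
    rw [← exp_add, exp_le_exp, ← add_div, div_le_div_iff₀ ht h2t]
    nlinarith [pow_le_pow_left₀ hr hv 2]
  have hintegral : ∫ v in A, exp (-‖v‖ ^ 2 / t) ≤ c * √(π * (2 * t)) ^ finrank ℝ V := by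
    have hint := (integrable_exp_neg_sq_norm_div (V := V) h2t).const_mul c
    rw [← integral_exp_neg_sq_norm_div h2t, ← integral_const_mul]
    calc ∫ v in A, exp (-‖v‖ ^ 2 / t)
        ≤ ∫ v in A, c * exp (-‖v‖ ^ 2 / (2 * t)) :=
          setIntegral_mono_on (integrable_exp_neg_sq_norm_div ht).integrableOn
            hint.integrableOn (isClosed_le continuous_const continuous_norm).measurableSet
            hdensity
      _ ≤ ∫ v, c * exp (-‖v‖ ^ 2 / (2 * t)) :=
          setIntegral_le_integral hint (ae_of_all _ fun _ => by positivity)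
  have hsqrt : √(π * (2 * t)) = √2 * √(π * t) := by
    rw [← sqrt_mul zero_le_two]; ring_nf
  calc gaussianMass t A
      ≤ (√(π * t) ^ finrank ℝ V)⁻¹ * (c * √(π * (2 * t)) ^ finrank ℝ V) :=
        mul_le_mul_of_nonneg_left hintegral (by positivity)
    _ = √2 ^ finrank ℝ V * c := by
        rw [hsqrt, mul_pow]
        field_simp

theorem tendsto_gaussianMass_norm_ge {r : ℝ} (hr : 0 < r) :
    Tendsto (fun t => gaussianMass t {v : V | r ≤ ‖v‖}) (𝓝[>] 0) (𝓝 0) := by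
  have hexponent : Tendsto (fun t : ℝ => -r ^ 2 / (2 * t)) (𝓝[>] 0) atBot := by
    simp_rw [div_eq_mul_inv, mul_inv, ← mul_assoc]
    exact tendsto_inv_nhdsGT_zero.const_mul_atTop_of_neg (by nlinarith)
  have hbound := (tendsto_exp_atBot.comp hexponent).const_mul (√2 ^ finrank ℝ V)
  rw [mul_zero] at hbound
  refine tendsto_of_tendsto_of_tendsto_of_le_of_le' tendsto_const_nhds hbound
    (Eventually.of_forall fun t => gaussianMass_nonneg t _) ?_
  filter_upwards [self_mem_nhdsWithin] with t ht using gaussianMass_norm_ge_le ht hr.le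

theorem tendsto_gaussianMass_of_compl_mem_nhds {S : Set V} (hS : Sᶜ ∈ 𝓝 0) :
    Tendsto (fun t => gaussianMass t S) (𝓝[>] 0) (𝓝 0) := by
  obtain ⟨r, hr, hball⟩ := Metric.mem_nhds_iff.1 hS
  have hSr : S ⊆ {v | r ≤ ‖v‖} := fun v hv => by
    simpa using fun h : v ∈ Metric.ball 0 r => hball h hv
  refine tendsto_of_tendsto_of_tendsto_of_le_of_le' tendsto_const_nhds
    (tendsto_gaussianMass_norm_ge (V := V) hr)
    (Eventually.of_forall fun t => gaussianMass_nonneg t _) ?_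
  filter_upwards [self_mem_nhdsWithin] with t ht using gaussianMass_mono ht hSr

theorem tendsto_gaussianMass_of_mem_nhds {S : Set V} (hS : S ∈ 𝓝 0) :
    Tendsto (fun t => gaussianMass t S) (𝓝[>] 0) (𝓝 1) := by
  obtain ⟨r, hr, hball⟩ := Metric.mem_nhds_iff.1 hS
  have hcompl : (Metric.ball (0 : V) r)ᶜ = {v | r ≤ ‖v‖} := by ext; simp
  have hlower := (tendsto_gaussianMass_norm_ge (V := V) hr).const_sub 1
  rw [sub_zero] at hlower
  refine tendsto_of_tendsto_of_tendsto_of_le_of_le' hlower tendsto_const_nhds ?_ ?_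
  · filter_upwards [self_mem_nhdsWithin] with t ht
    rw [← hcompl, ← gaussianMass_add_compl ht (measurableSet_ball (x := (0 : V))),
      add_sub_cancel_right]
    exact gaussianMass_mono ht hball
  · filter_upwards [self_mem_nhdsWithin] with t ht using gaussianMass_le_one ht S

end Gaussian

theorem gaussian_concentration_indicator_general (k : ℕ)
    (F G : Set (EuclideanSpace ℝ (Fin k)))
    (u : EuclideanSpace ℝ (Fin k))
    (huF : u ∉ frontier F) (huG : u ∉ frontier G) :
    Filter.Tendsto
      (fun lam : ℝ =>
        (Real.sqrt (π * (1 - lam)) ^ k)⁻¹ *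
          ∫ v in {v | u + v ∈ F ∧ u - v ∈ G}, Real.exp (-‖v‖ ^ 2 / (1 - lam)))
      (nhdsWithin 1 (Set.Iio (1:ℝ)))
      (nhds (Set.indicator (F ∩ G) (fun _ => (1:ℝ)) u)) := by
  set S := {v | u + v ∈ F ∧ u - v ∈ G}
  have hS : ∀ᶠ v in 𝓝 0, (v ∈ S ↔ u ∈ F ∩ G) := by
    have hF := ((continuous_const_add u).tendsto' 0 u (add_zero u)).eventually
      (eventually_mem_iff_of_notMem_frontier huF)
    have hG := ((continuous_sub_left u).tendsto' 0 u (sub_zero u)).eventually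
      (eventually_mem_iff_of_notMem_frontier huG)
    filter_upwards [hF, hG] with v hvF hvG using and_congr hvF hvG
  have hk : finrank ℝ (EuclideanSpace ℝ (Fin k)) = k := finrank_euclideanSpace_fin
  suffices
      Tendsto (fun t => gaussianMass t S) (𝓝[>] 0) (𝓝 ((F ∩ G).indicator (fun _ => 1) u)) by
    simpa only [gaussianMass, hk, Function.comp_def] using this.comp tendsto_one_sub_nhdsLT_one
  by_cases hu : u ∈ F ∩ G
  · rw [indicator_of_mem hu]
    exact tendsto_gaussianMass_of_mem_nhds (hS.mono fun v hv => hv.2 hu)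
  · rw [indicator_of_notMem hu]
    exact tendsto_gaussianMass_of_compl_mem_nhds (hS.mono fun v hv => mt hv.1 hu)

/-- For `u` not on the boundary of the convex sets `F` and `G`,
`(π(1-λ))^{-k/2} ∫_{(F-u)∩(u-G)} exp(-‖v‖²/(1-λ)) dv → χ_{F∩G}(u)` as `λ → 1⁻`. -/
theorem gaussian_concentration_indicator (k : ℕ)
    (F G : Set (EuclideanSpace ℝ (Fin k)))
    (hFconv : Convex ℝ F) (hGconv : Convex ℝ G)
    (u : EuclideanSpace ℝ (Fin k))
    (huF : u ∉ frontier F) (huG : u ∉ frontier G) :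
    Filter.Tendsto
      (fun lam : ℝ =>
        (Real.sqrt (π * (1 - lam)) ^ k)⁻¹ *
          ∫ v in {v | u + v ∈ F ∧ u - v ∈ G}, Real.exp (-‖v‖ ^ 2 / (1 - lam)))
      (nhdsWithin 1 (Set.Iio (1:ℝ)))
      (nhds (Set.indicator (F ∩ G) (fun _ => (1:ℝ)) u)) :=
  gaussian_concentration_indicator_general k F G u huF huG
end
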